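/- Let n ≥ 2, K ∈ ℕ, p ∈ ℤ, and let k = (k_1, k_2, k') ∈ ℕ^n with k_1 + ⋯ + k_n = K, k_1 + p ≥ k_2 + 1 and k_2 ≥ p. Assume κ^{2m} ≠ 1 for all integers m ≥ 1, and assume the genericity conditions: τ_a²/τ_b² ∉ {q^m : m ∈ ℤ} for all pairs a < b with (a,b) ≠ (1,2), and σ_j²/τ_a² ∉ {q^m : m ∈ ℤ} for all j and all a (with q = κ²). Then, writing φ_p(k) := (k_2 − p, k_1 + p, k'), the function τ_2 ↦ (τ_2 − κ^p τ_1) · ( Y_k(σ;(τ_1,τ_2,…,τ_n)) + Y_{φ_p(k)}(σ;(τ_1,τ_2,…,τ_n)) ) tends to 0 as τ_2 tends to κ^p τ_1 within ℂ∖{κ^p τ_1}; i.e., the residues of Y_k and Y_{φ_p(k)} at v_2 = q^p v_1 cancel. -/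
import Mathlib


open Filter Topology

/-- The symmetric q-Pochhammer bracket
`⟨ζ⟩_m = ∏_{l=0}^{m-1} (κ^l ζ − κ^{−l} ζ⁻¹)`, representing `[ζ²; κ²]_m`. -/
noncomputable def br (κ ζ : ℂ) (m : ℕ) : ℂ :=
  ∏ l ∈ Finset.range m, (κ ^ l * ζ - κ ^ (-(l : ℤ)) * ζ⁻¹)

/-- The summand `X_k(σ;τ)` of the left-hand side of the duality identity,
written in terms of the square roots `σ_i` of `u_i`, `τ_a` of `v_a`,
`κ` of `q` and `ρ` of `t`. -/
noncomputable def Xsum (κ ρ : ℂ) {n : ℕ} (k : Fin n → ℕ) (σ τ : Fin n → ℂ) : ℂ :=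
  (∏ i, br κ (κ * ρ) (k i) / br κ κ (k i)) *
  (∏ i, ∏ j ∈ Finset.univ.filter (fun j => j ≠ i),
      br κ (ρ⁻¹ * κ ^ (-(k j : ℤ)) * (σ i / σ j)) (k i) /
        br κ (κ ^ (-(k j : ℤ)) * (σ i / σ j)) (k i)) *
  (∏ a, ∏ j, br κ (ρ * σ j / τ a) (k j) / br κ (σ j / τ a) (k j))

/-- The summand `Y_k(σ;τ)` of the right-hand side of the duality identity. -/
noncomputable def Ysum (κ ρ : ℂ) {n : ℕ} (k : Fin n → ℕ) (σ τ : Fin n → ℂ) : ℂ :=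
  (∏ a, br κ (κ * ρ) (k a) / br κ κ (k a)) *
  (∏ a, ∏ b ∈ Finset.univ.filter (fun b => b ≠ a),
      br κ (ρ⁻¹ * κ ^ (-(k a : ℤ)) * (τ a / τ b)) (k b) /
        br κ (κ ^ (-(k a : ℤ)) * (τ a / τ b)) (k b)) *
  (∏ a, ∏ j, br κ (ρ * σ j / τ a) (k a) / br κ (σ j / τ a) (k a))

noncomputable def Fb (κ ζ : ℂ) (l : ℤ) : ℂ := κ ^ l * ζ - κ ^ (-l) * ζ⁻¹
noncomputable def Pb (κ ζ : ℂ) (a c : ℤ) : ℂ := ∏ l ∈ Finset.Ioc a c, Fb κ ζ l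

lemma Pb_mul (κ ζ : ℂ) {a b c : ℤ} (h1 : a ≤ b) (h2 : b ≤ c) :
    Pb κ ζ a b * Pb κ ζ b c = Pb κ ζ a c := by
  unfold Pb
  have hd : Disjoint (Finset.Ioc a b) (Finset.Ioc b c) := by
    simp only [Finset.disjoint_left, Finset.mem_Ioc]
    intro x h1 h2; omega
  rw [← Finset.prod_union hd, Finset.Ioc_union_Ioc_eq_Ioc h1 h2]

lemma Pb_exchange (κ ζ : ℂ) {a b c d : ℤ} (hac : a ≤ c) (had : a ≤ d)
    (hbc : b ≤ c) (hbd : b ≤ d) :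
    Pb κ ζ a c * Pb κ ζ b d = Pb κ ζ a d * Pb κ ζ b c := by
  rcases le_total c d with h | h
  · rw [← Pb_mul κ ζ hac h, ← Pb_mul κ ζ hbc h]; ring
  · rw [← Pb_mul κ ζ had h, ← Pb_mul κ ζ hbd h]; ring

lemma Fb_flip (κ ζ : ℂ) (l : ℤ) : Fb κ ζ⁻¹ (-l) = - Fb κ ζ l := by
  simp only [Fb, neg_neg, inv_inv]; ring

lemma Pb_flip (κ ζ : ℂ) (a c : ℤ) :
    Pb κ ζ⁻¹ (-c - 1) (-a - 1) = (-1) ^ (c - a).toNat * Pb κ ζ a c := by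
  have : Pb κ ζ⁻¹ (-c-1) (-a-1) = ∏ l ∈ Finset.Ioc a c, Fb κ ζ⁻¹ (-l) := by
    refine (Finset.prod_nbij' (fun i => -i) (fun j => -j) ?_ ?_ ?_ ?_ ?_).symm
    · intro x hx; simp only [Finset.mem_Ioc] at *; omega
    · intro x hx; simp only [Finset.mem_Ioc] at *; omega
    · intro x _; ring
    · intro x _; ring
    · intro x _; rfl
  rw [this]
  have : ∀ l ∈ Finset.Ioc a c, Fb κ ζ⁻¹ (-l) = (-1) * Fb κ ζ l := by
    intro l _; rw [Fb_flip]; ring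
  rw [Finset.prod_congr rfl this, Finset.prod_mul_distrib, Finset.prod_const,
    Int.card_Ioc, Pb]

lemma prod_Ico_shift (g : ℤ → ℂ) (s : ℤ) (a b : ℕ) :
    ∏ l ∈ Finset.Ico a b, g (s + l) = ∏ l ∈ Finset.Ioc (s + a - 1) (s + b - 1), g l := by
  refine Finset.prod_nbij' (fun i => s + i) (fun j => (j - s).toNat) ?_ ?_ ?_ ?_ ?_
  · intro x hx; simp only [Finset.mem_Ico, Finset.mem_Ioc] at *; omega
  · intro x hx; simp only [Finset.mem_Ico, Finset.mem_Ioc] at *; omega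
  · intro x hx; simp only [Finset.mem_Ico] at hx; omega
  · intro x hx; simp only [Finset.mem_Ioc] at hx; omega
  · intro x _; rfl

lemma Fb_factor (κ : ℂ) (hκ : κ ≠ 0) (s : ℤ) (ζ : ℂ) (l : ℕ) :
    κ ^ l * (κ ^ s * ζ) - κ ^ (-(l:ℤ)) * (κ ^ s * ζ)⁻¹ = Fb κ ζ (s + l) := by
  rw [Fb, mul_inv, ← zpow_neg, neg_add]
  rw [show (κ:ℂ) ^ (l:ℕ) = κ ^ (l:ℤ) from (zpow_natCast κ l).symm,
    ← mul_assoc, ← mul_assoc, ← zpow_add₀ hκ, ← zpow_add₀ hκ]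
  ring_nf

lemma br_eq_Pb (κ : ℂ) (hκ : κ ≠ 0) (s : ℤ) (ζ : ℂ) (m : ℕ) :
    br κ (κ ^ s * ζ) m = Pb κ ζ (s - 1) (s + m - 1) := by
  rw [br, Pb]
  rw [Finset.prod_congr rfl (fun l _ => Fb_factor κ hκ s ζ l), Finset.range_eq_Ico,
    prod_Ico_shift (Fb κ ζ) s 0 m]
  norm_num

lemma br_Pb0 (κ : ℂ) (hκ : κ ≠ 0) (ζ : ℂ) (m : ℕ) :
    br κ ζ m = Pb κ ζ (-1) ((m:ℤ) - 1) := by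
  have := br_eq_Pb κ hκ 0 ζ m
  simpa using this

noncomputable def brE (κ ζ : ℂ) (m j : ℕ) : ℂ :=
  ∏ l ∈ (Finset.range m).erase j, (κ ^ l * ζ - κ ^ (-(l : ℤ)) * ζ⁻¹)

lemma br_erase (κ ζ : ℂ) {m j : ℕ} (hj : j < m) :
    br κ ζ m = (κ ^ j * ζ - κ ^ (-(j:ℤ)) * ζ⁻¹) * brE κ ζ m j :=
  (Finset.mul_prod_erase _ _ (Finset.mem_range.2 hj)).symm

lemma brE_eq_Pb (κ : ℂ) (hκ : κ ≠ 0) {j m : ℕ} (hj : j < m) (ζ : ℂ) :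
    brE κ (κ ^ (-(j:ℤ)) * ζ) m j =
      Pb κ ζ (-(j:ℤ) - 1) (-1) * Pb κ ζ 0 ((m:ℤ) - 1 - j) := by
  rw [brE, Finset.prod_congr rfl (fun l _ => Fb_factor κ hκ (-(j:ℤ)) ζ l)]
  have hsplit : (Finset.range m).erase j = Finset.Ico 0 j ∪ Finset.Ico (j+1) m := by
    ext x
    simp only [Finset.mem_erase, Finset.mem_range, Finset.mem_union, Finset.mem_Ico]
    omega
  have hd : Disjoint (Finset.Ico 0 j) (Finset.Ico (j+1) m) := by
    simp only [Finset.disjoint_left, Finset.mem_Ico]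
    intro x h1 h2; omega
  rw [hsplit, Finset.prod_union hd, prod_Ico_shift (Fb κ ζ) (-(j:ℤ)) 0 j,
    prod_Ico_shift (Fb κ ζ) (-(j:ℤ)) (j+1) m]
  norm_num
  congr 2 <;> push_cast <;> ring

lemma L1br (κ : ℂ) (hκ : κ ≠ 0) (ξ : ℂ) (k₀ k₁ α β : ℕ) (p : ℤ)
    (hα : (α:ℤ) = k₁ - p) (hβ : (β:ℤ) = k₀ + p) :
    br κ ξ k₀ * br κ (κ ^ (-p) * ξ) k₁ = br κ ξ α * br κ (κ ^ (-p) * ξ) β := by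
  rw [br_Pb0 κ hκ ξ k₀, br_Pb0 κ hκ ξ α, br_eq_Pb κ hκ (-p) ξ k₁, br_eq_Pb κ hκ (-p) ξ β]
  rw [show (-p + (k₁:ℤ) - 1) = (α:ℤ) - 1 by omega,
    show (-p + (β:ℤ) - 1) = (k₀:ℤ) - 1 by omega]
  exact Pb_exchange κ ξ (by omega) (by omega) (by omega) (by omega)

lemma br_flip (κ ρ : ℂ) (hκ : κ ≠ 0) (s : ℤ) (m : ℕ) :
    br κ (κ ^ s * ρ⁻¹) m = (-1) ^ m * Pb κ ρ (-s - m) (-s) := by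
  rw [br_eq_Pb κ hκ]
  rw [show s - 1 = -(-s) - 1 by ring, show s + (m:ℤ) - 1 = -(-s - m) - 1 by ring, Pb_flip]
  rw [show ((-s) - (-s - (m:ℤ))).toNat = m by omega]

lemma br_one (κ : ℂ) (hκ : κ ≠ 0) (m : ℕ) : br κ κ m = Pb κ 1 0 m := by
  have h := br_eq_Pb κ hκ 1 1 m
  rw [zpow_one, mul_one] at h
  rw [h]; congr 1 <;> omega

lemma Pb_one_eq (κ : ℂ) {a b a' b' : ℤ} (h1 : a = a') (h2 : b = b') :
    Pb κ 1 a b = Pb κ 1 a' b' := by rw [h1, h2]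

lemma L2br (κ ρ : ℂ) (hκ : κ ≠ 0) (k₀ k₁ α β : ℕ) (p : ℤ)
    (hα : (α:ℤ) = k₁ - p) (hβ : (β:ℤ) = k₀ + p) (h1 : (k₁:ℤ) + 1 ≤ (k₀:ℤ) + p) :
    br κ (κ ^ (1:ℤ) * ρ) k₀ * br κ (κ ^ (1:ℤ) * ρ) k₁ *
      br κ (κ ^ (-(β:ℤ)) * ρ⁻¹) k₁ * br κ (κ ^ (-(α:ℤ)) * ρ⁻¹) k₀
    = br κ (κ ^ (1:ℤ) * ρ) α * br κ (κ ^ (1:ℤ) * ρ) β *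
      br κ (κ ^ (-(k₁:ℤ)) * ρ⁻¹) β * br κ (κ ^ (-(k₀:ℤ)) * ρ⁻¹) α := by
  have e1 : br κ (κ ^ (1:ℤ) * ρ) k₀ = Pb κ ρ 0 k₀ := by
    rw [br_eq_Pb κ hκ]; congr 1 <;> omega
  have e2 : br κ (κ ^ (1:ℤ) * ρ) k₁ = Pb κ ρ 0 k₁ := by
    rw [br_eq_Pb κ hκ]; congr 1 <;> omega
  have e5 : br κ (κ ^ (1:ℤ) * ρ) α = Pb κ ρ 0 α := by
    rw [br_eq_Pb κ hκ]; congr 1 <;> omega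
  have e6 : br κ (κ ^ (1:ℤ) * ρ) β = Pb κ ρ 0 β := by
    rw [br_eq_Pb κ hκ]; congr 1 <;> omega
  have e3 : br κ (κ ^ (-(β:ℤ)) * ρ⁻¹) k₁ = (-1) ^ k₁ * Pb κ ρ ((k₀:ℤ) - α) β := by
    rw [br_flip κ ρ hκ]; congr 2 <;> omega
  have e4 : br κ (κ ^ (-(α:ℤ)) * ρ⁻¹) k₀ = (-1) ^ k₀ * Pb κ ρ ((α:ℤ) - k₀) α := by
    rw [br_flip κ ρ hκ]; congr 2 <;> omega
  have e7 : br κ (κ ^ (-(k₁:ℤ)) * ρ⁻¹) β = (-1) ^ β * Pb κ ρ ((α:ℤ) - k₀) k₁ := by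
    rw [br_flip κ ρ hκ]; congr 2 <;> omega
  have e8 : br κ (κ ^ (-(k₀:ℤ)) * ρ⁻¹) α = (-1) ^ α * Pb κ ρ ((k₀:ℤ) - α) k₀ := by
    rw [br_flip κ ρ hκ]; congr 2 <;> omega
  rw [e1, e2, e3, e4, e5, e6, e7, e8]
  have hsign : ((-1:ℂ)) ^ k₁ * (-1) ^ k₀ = (-1) ^ β * (-1) ^ α := by
    rw [← pow_add, ← pow_add]
    have : k₁ + k₀ = β + α := by omega
    rw [this]
  have E1 : Pb κ ρ 0 k₀ * Pb κ ρ ((α:ℤ) - k₀) α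
      = Pb κ ρ 0 α * Pb κ ρ ((α:ℤ) - k₀) k₀ :=
    Pb_exchange κ ρ (by omega) (by omega) (by omega) (by omega)
  have E2 : Pb κ ρ ((α:ℤ) - k₀) k₀ * Pb κ ρ 0 k₁
      = Pb κ ρ ((α:ℤ) - k₀) k₁ * Pb κ ρ 0 k₀ :=
    Pb_exchange κ ρ (by omega) (by omega) (by omega) (by omega)
  have E3 : Pb κ ρ 0 k₀ * Pb κ ρ ((k₀:ℤ) - α) β
      = Pb κ ρ 0 β * Pb κ ρ ((k₀:ℤ) - α) k₀ :=
    Pb_exchange κ ρ (by omega) (by omega) (by omega) (by omega)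
  set s1 : ℂ := (-1) ^ k₁ * (-1) ^ k₀
  linear_combination (s1 * Pb κ ρ 0 k₁ * Pb κ ρ ((k₀:ℤ) - α) β) * E1 +
    (s1 * Pb κ ρ 0 α * Pb κ ρ ((k₀:ℤ) - α) β) * E2 +
    (s1 * Pb κ ρ 0 α * Pb κ ρ ((α:ℤ) - k₀) k₁) * E3 +
    (Pb κ ρ 0 α * Pb κ ρ 0 β * Pb κ ρ ((α:ℤ) - k₀) k₁ * Pb κ ρ ((k₀:ℤ) - α) k₀) * hsign

lemma L3br (κ : ℂ) (hκ : κ ≠ 0) (k₀ k₁ α β : ℕ) (p : ℤ)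
    (hα : (α:ℤ) = k₁ - p) (hβ : (β:ℤ) = k₀ + p) (h1 : (k₁:ℤ) + 1 ≤ (k₀:ℤ) + p) :
    br κ κ k₀ * br κ κ k₁ * br κ (κ ^ (-(β:ℤ)) * 1) k₁ * brE κ (κ ^ (-(α:ℤ)) * 1) k₀ α
    = br κ κ α * br κ κ β * brE κ (κ ^ (-(k₁:ℤ)) * 1) β k₁ * br κ (κ ^ (-(k₀:ℤ)) * 1) α := by
  have hακ : α < k₀ := by omega
  have hκβ : k₁ < β := by omega
  have fl : ∀ (s : ℤ) (m : ℕ), br κ (κ ^ s * 1) m = (-1) ^ m * Pb κ 1 (-s - m) (-s) := by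
    intro s m
    have := br_flip κ 1 hκ s m
    rwa [inv_one] at this
  have flP : ∀ (a c : ℤ), Pb κ 1 (-c-1) (-a-1) = (-1) ^ (c - a).toNat * Pb κ 1 a c := by
    intro a c
    have := Pb_flip κ 1 a c
    rwa [inv_one] at this
  have e3 : br κ (κ ^ (-(β:ℤ)) * 1) k₁ = (-1) ^ k₁ * Pb κ 1 ((k₀:ℤ) - α) β := by
    rw [fl]; congr 2 <;> omega
  have e8 : br κ (κ ^ (-(k₀:ℤ)) * 1) α = (-1) ^ α * Pb κ 1 ((k₀:ℤ) - α) k₀ := by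
    rw [fl]; congr 2 <;> omega
  have e4 : brE κ (κ ^ (-(α:ℤ)) * 1) k₀ α
      = (-1) ^ α * Pb κ 1 0 α * Pb κ 1 0 ((k₀:ℤ) - 1 - α) := by
    rw [brE_eq_Pb κ hκ hακ 1]
    have h' : Pb κ 1 (-(α:ℤ) - 1) (-1) = (-1) ^ α * Pb κ 1 0 α := by
      have := flP 0 (α:ℤ)
      rw [show (-(0:ℤ) - 1) = -1 by ring] at this
      rw [this]; simp
    rw [h']
  have e7 : brE κ (κ ^ (-(k₁:ℤ)) * 1) β k₁
      = (-1) ^ k₁ * Pb κ 1 0 k₁ * Pb κ 1 0 ((k₀:ℤ) - 1 - α) := by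
    rw [brE_eq_Pb κ hκ hκβ 1]
    have h' : Pb κ 1 (-(k₁:ℤ) - 1) (-1) = (-1) ^ k₁ * Pb κ 1 0 k₁ := by
      have := flP 0 (k₁:ℤ)
      rw [show (-(0:ℤ) - 1) = -1 by ring] at this
      rw [this]; simp
    rw [h', Pb_one_eq κ (rfl : (0:ℤ) = 0) (show (β:ℤ) - 1 - k₁ = (k₀:ℤ) - 1 - α by omega)]
  rw [br_one κ hκ, br_one κ hκ, br_one κ hκ, br_one κ hκ, e3, e4, e7, e8]
  have E : Pb κ 1 0 k₀ * Pb κ 1 ((k₀:ℤ) - α) β = Pb κ 1 0 β * Pb κ 1 ((k₀:ℤ) - α) k₀ :=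
    Pb_exchange κ 1 (by omega) (by omega) (by omega) (by omega)
  linear_combination ((-1:ℂ)) ^ k₁ * (-1) ^ α * Pb κ 1 0 k₁ * Pb κ 1 0 α * Pb κ 1 0 ((k₀:ℤ) - 1 - α) * E

lemma swap_br (κ : ℂ) (hκ : κ ≠ 0) (x : ℂ) (k₀ k₁ α β L : ℕ) (p : ℤ)
    (hα : (α:ℤ) = k₁ - p) (hβ : (β:ℤ) = k₀ + p) :
    br κ (κ ^ (-(k₀:ℤ)) * x) L * br κ (κ ^ (-(k₁:ℤ)) * (κ ^ p * x)) L
    = br κ (κ ^ (-(α:ℤ)) * x) L * br κ (κ ^ (-(β:ℤ)) * (κ ^ p * x)) L := by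
  have e1 : κ ^ (-(k₁:ℤ)) * (κ ^ p * x) = κ ^ (-(α:ℤ)) * x := by
    rw [← mul_assoc, ← zpow_add₀ hκ, show -(k₁:ℤ) + p = -(α:ℤ) by omega]
  have e2 : κ ^ (-(β:ℤ)) * (κ ^ p * x) = κ ^ (-(k₀:ℤ)) * x := by
    rw [← mul_assoc, ← zpow_add₀ hκ, show -(β:ℤ) + p = -(k₀:ℤ) by omega]
  rw [e1, e2, mul_comm]

noncomputable def NumY (κ ρ : ℂ) {n : ℕ} (k : Fin n → ℕ) (σ τ : Fin n → ℂ) : ℂ :=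
  (∏ a, br κ (κ * ρ) (k a)) *
  (∏ a, ∏ b ∈ Finset.univ.erase a, br κ (ρ⁻¹ * κ ^ (-(k a : ℤ)) * (τ a / τ b)) (k b)) *
  (∏ a, ∏ j, br κ (ρ * σ j / τ a) (k a))

noncomputable def DenY (κ : ℂ) {n : ℕ} (k : Fin n → ℕ) (σ τ : Fin n → ℂ) : ℂ :=
  (∏ a, br κ κ (k a)) *
  (∏ a, ∏ b ∈ Finset.univ.erase a, br κ (κ ^ (-(k a : ℤ)) * (τ a / τ b)) (k b)) *
  (∏ a, ∏ j, br κ (σ j / τ a) (k a))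

noncomputable def DenE (κ : ℂ) {n : ℕ} (k : Fin n → ℕ) (σ τ : Fin n → ℂ)
    (a₀ b₀ : Fin n) (j₀ : ℕ) : ℂ :=
  (∏ a, br κ κ (k a)) *
  ((brE κ (κ ^ (-(k a₀ : ℤ)) * (τ a₀ / τ b₀)) (k b₀) j₀ *
      ∏ b ∈ (Finset.univ.erase a₀).erase b₀, br κ (κ ^ (-(k a₀ : ℤ)) * (τ a₀ / τ b)) (k b)) *
    ∏ a ∈ Finset.univ.erase a₀, ∏ b ∈ Finset.univ.erase a,
      br κ (κ ^ (-(k a : ℤ)) * (τ a / τ b)) (k b)) *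
  (∏ a, ∏ j, br κ (σ j / τ a) (k a))

lemma Ysum_eq (κ ρ : ℂ) {n : ℕ} (k : Fin n → ℕ) (σ τ : Fin n → ℂ) :
    Ysum κ ρ k σ τ = NumY κ ρ k σ τ / DenY κ k σ τ := by
  unfold Ysum NumY DenY
  simp only [Finset.filter_ne', Finset.prod_div_distrib]
  rw [div_mul_div_comm, div_mul_div_comm]

lemma DenY_eq_DenE (κ : ℂ) {n : ℕ} (k : Fin n → ℕ) (σ τ : Fin n → ℂ)
    (a₀ b₀ : Fin n) (hab : b₀ ≠ a₀) (j₀ : ℕ) (hj : j₀ < k b₀) :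
    DenY κ k σ τ =
      (κ ^ j₀ * (κ ^ (-(k a₀ : ℤ)) * (τ a₀ / τ b₀)) -
        κ ^ (-(j₀:ℤ)) * (κ ^ (-(k a₀ : ℤ)) * (τ a₀ / τ b₀))⁻¹) *
      DenE κ k σ τ a₀ b₀ j₀ := by
  unfold DenY DenE
  rw [← Finset.mul_prod_erase Finset.univ
      (fun a => ∏ b ∈ Finset.univ.erase a, br κ (κ ^ (-(k a : ℤ)) * (τ a / τ b)) (k b))
      (Finset.mem_univ a₀)]
  rw [← Finset.mul_prod_erase (Finset.univ.erase a₀)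
      (fun b => br κ (κ ^ (-(k a₀ : ℤ)) * (τ a₀ / τ b)) (k b))
      (Finset.mem_erase.2 ⟨hab, Finset.mem_univ b₀⟩)]
  rw [br_erase κ _ hj]
  ring

section splits
variable {n : ℕ}

lemma fin_ne10 : (1 : Fin (n+2)) ≠ 0 := by
  simp [Fin.ext_iff]

def Tset (n : ℕ) : Finset (Fin (n+2)) := (Finset.univ.erase 0).erase 1

lemma mem_Tset {a : Fin (n+2)} : a ∈ Tset n ↔ a ≠ 0 ∧ a ≠ 1 := by
  simp [Tset, Finset.mem_erase, and_comm]

lemma prodA_split (h : Fin (n+2) → ℂ) :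
    ∏ a, h a = h 0 * h 1 * ∏ a ∈ Tset n, h a := by
  rw [← Finset.mul_prod_erase Finset.univ h (Finset.mem_univ 0),
    ← Finset.mul_prod_erase (Finset.univ.erase 0) h
      (Finset.mem_erase.2 ⟨fin_ne10, Finset.mem_univ 1⟩)]
  rw [Tset, mul_assoc]

lemma erase10 : (Finset.univ.erase (1 : Fin (n+2))).erase 0 = Tset n := by
  rw [Tset]; ext x; simp only [Finset.mem_erase, Finset.mem_univ, and_true]; tauto

lemma eraseA0 {a : Fin (n+2)} (ha : a ∈ Tset n) :
    ((Finset.univ.erase a).erase 0).erase 1 = (Tset n).erase a := by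
  rw [Tset]; ext x; simp only [Finset.mem_erase, Finset.mem_univ, and_true]; tauto

lemma rowT_split {a : Fin (n+2)} (ha : a ∈ Tset n) (g : Fin (n+2) → ℂ) :
    ∏ b ∈ Finset.univ.erase a, g b = g 0 * g 1 * ∏ b ∈ (Tset n).erase a, g b := by
  rw [mem_Tset] at ha
  rw [← Finset.mul_prod_erase (Finset.univ.erase a) g
      (Finset.mem_erase.2 ⟨Ne.symm ha.1, Finset.mem_univ 0⟩),
    ← Finset.mul_prod_erase ((Finset.univ.erase a).erase 0) g
      (by
        refine Finset.mem_erase.2 ⟨fin_ne10, Finset.mem_erase.2 ⟨Ne.symm ha.2, Finset.mem_univ 1⟩⟩)]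
  rw [eraseA0 (mem_Tset.2 ha), mul_assoc]

lemma row0_split (g : Fin (n+2) → ℂ) :
    ∏ b ∈ Finset.univ.erase (0 : Fin (n+2)), g b = g 1 * ∏ b ∈ Tset n, g b := by
  rw [← Finset.mul_prod_erase (Finset.univ.erase 0) g
      (Finset.mem_erase.2 ⟨fin_ne10, Finset.mem_univ 1⟩)]
  rfl

lemma row1_split (g : Fin (n+2) → ℂ) :
    ∏ b ∈ Finset.univ.erase (1 : Fin (n+2)), g b = g 0 * ∏ b ∈ Tset n, g b := by
  rw [← Finset.mul_prod_erase (Finset.univ.erase 1) g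
      (Finset.mem_erase.2 ⟨Ne.symm fin_ne10, Finset.mem_univ 0⟩), erase10]

lemma prodB_split (g : Fin (n+2) → Fin (n+2) → ℂ) :
    (∏ a, ∏ b ∈ Finset.univ.erase a, g a b)
    = (g 0 1 * g 1 0) * (∏ a ∈ Tset n, g 0 a * g 1 a) * (∏ a ∈ Tset n, g a 0 * g a 1) *
      (∏ a ∈ Tset n, ∏ b ∈ (Tset n).erase a, g a b) := by
  rw [prodA_split (fun a => ∏ b ∈ Finset.univ.erase a, g a b)]
  rw [show (∏ b ∈ Finset.univ.erase (0:Fin (n+2)), g 0 b) = g 0 1 * ∏ b ∈ Tset n, g 0 b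
      from row0_split (g 0),
    show (∏ b ∈ Finset.univ.erase (1:Fin (n+2)), g 1 b) = g 1 0 * ∏ b ∈ Tset n, g 1 b
      from row1_split (g 1),
    Finset.prod_congr rfl (fun a ha => rowT_split ha (g a)),
    Finset.prod_mul_distrib, Finset.prod_mul_distrib,
    show (∏ a ∈ Tset n, g 0 a * g 1 a) = (∏ a ∈ Tset n, g 0 a) * (∏ a ∈ Tset n, g 1 a)
      from Finset.prod_mul_distrib]
  ring

lemma prodB_split_erase1 (g : Fin (n+2) → Fin (n+2) → ℂ) :
    (∏ a ∈ Finset.univ.erase 1, ∏ b ∈ Finset.univ.erase a, g a b)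
    = g 0 1 * (∏ a ∈ Tset n, g 0 a) * (∏ a ∈ Tset n, g a 0 * g a 1) *
      (∏ a ∈ Tset n, ∏ b ∈ (Tset n).erase a, g a b) := by
  rw [row1_split (fun a => ∏ b ∈ Finset.univ.erase a, g a b),
    show (∏ b ∈ Finset.univ.erase (0:Fin (n+2)), g 0 b) = g 0 1 * ∏ b ∈ Tset n, g 0 b
      from row0_split (g 0),
    Finset.prod_congr rfl (fun a ha => rowT_split ha (g a)),
    Finset.prod_mul_distrib, Finset.prod_mul_distrib]
  ring

lemma prodB_split_erase0 (g : Fin (n+2) → Fin (n+2) → ℂ) :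
    (∏ a ∈ Finset.univ.erase 0, ∏ b ∈ Finset.univ.erase a, g a b)
    = g 1 0 * (∏ a ∈ Tset n, g 1 a) * (∏ a ∈ Tset n, g a 0 * g a 1) *
      (∏ a ∈ Tset n, ∏ b ∈ (Tset n).erase a, g a b) := by
  rw [row0_split (fun a => ∏ b ∈ Finset.univ.erase a, g a b),
    show (∏ b ∈ Finset.univ.erase (1:Fin (n+2)), g 1 b) = g 1 0 * ∏ b ∈ Tset n, g 1 b
      from row1_split (g 1),
    Finset.prod_congr rfl (fun a ha => rowT_split ha (g a)),
    Finset.prod_mul_distrib, Finset.prod_mul_distrib]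
  ring

end splits

lemma ne01 {n : ℕ} : (0 : Fin (n+2)) ≠ 1 := Ne.symm fin_ne10

lemma NumY_identity {n : ℕ} (κ ρ : ℂ) (hκ0 : κ ≠ 0)
    (σ τ : Fin (n+2) → ℂ) (k : Fin (n+2) → ℕ) (p : ℤ)
    (hτ0 : τ 0 ≠ 0)
    (h1 : (k 1 : ℤ) + 1 ≤ (k 0 : ℤ) + p) (h2 : p ≤ (k 1 : ℤ)) :
    NumY κ ρ (Function.update (Function.update k 0 ((k 1 : ℤ) - p).toNat) 1
        ((k 0 : ℤ) + p).toNat) σ (Function.update τ 1 (κ ^ p * τ 0))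
      = NumY κ ρ k σ (Function.update τ 1 (κ ^ p * τ 0)) := by
  set α : ℕ := ((k 1 : ℤ) - p).toNat with hαdef
  set β : ℕ := ((k 0 : ℤ) + p).toNat with hβdef
  have hα : (α : ℤ) = (k 1 : ℤ) - p := Int.toNat_of_nonneg (by omega)
  have hβ : (β : ℤ) = (k 0 : ℤ) + p := Int.toNat_of_nonneg (by omega)
  set c : ℂ := κ ^ p * τ 0 with hcdef
  set τc : Fin (n+2) → ℂ := Function.update τ 1 c with hτcdef
  set k' : Fin (n+2) → ℕ := Function.update (Function.update k 0 α) 1 β with hk'def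
  have hτc0 : τc 0 = τ 0 := Function.update_of_ne ne01 _ _
  have hτc1 : τc 1 = c := Function.update_self _ _ _
  have hτcT : ∀ a ∈ Tset n, τc a = τ a := fun a ha =>
    Function.update_of_ne (mem_Tset.1 ha).2 _ _
  have hk'0 : k' 0 = α := by
    rw [hk'def, Function.update_of_ne ne01, Function.update_self]
  have hk'1 : k' 1 = β := Function.update_self _ _ _
  have hk'T : ∀ a ∈ Tset n, k' a = k a := by
    intro a ha
    rw [hk'def, Function.update_of_ne (mem_Tset.1 ha).2, Function.update_of_ne (mem_Tset.1 ha).1]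
  unfold NumY
  rw [prodA_split (fun a => br κ (κ * ρ) (k' a)),
    prodA_split (fun a => br κ (κ * ρ) (k a)),
    prodB_split (fun a b => br κ (ρ⁻¹ * κ ^ (-(k' a : ℤ)) * (τc a / τc b)) (k' b)),
    prodB_split (fun a b => br κ (ρ⁻¹ * κ ^ (-(k a : ℤ)) * (τc a / τc b)) (k b)),
    prodA_split (fun a => ∏ j, br κ (ρ * σ j / τc a) (k' a)),
    prodA_split (fun a => ∏ j, br κ (ρ * σ j / τc a) (k a))]
  -- T-chunk equalities
  have E0 : ∏ a ∈ Tset n, br κ (κ * ρ) (k' a) = ∏ a ∈ Tset n, br κ (κ * ρ) (k a) :=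
    Finset.prod_congr rfl fun a ha => by rw [hk'T a ha]
  have E2 : ∏ a ∈ Tset n,
        br κ (ρ⁻¹ * κ ^ (-(k' 0 : ℤ)) * (τc 0 / τc a)) (k' a) *
          br κ (ρ⁻¹ * κ ^ (-(k' 1 : ℤ)) * (τc 1 / τc a)) (k' a)
      = ∏ a ∈ Tset n,
        br κ (ρ⁻¹ * κ ^ (-(k 0 : ℤ)) * (τc 0 / τc a)) (k a) *
          br κ (ρ⁻¹ * κ ^ (-(k 1 : ℤ)) * (τc 1 / τc a)) (k a) := by
    refine Finset.prod_congr rfl fun a ha => ?_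
    rw [hk'T a ha, hk'0, hk'1, hτc0, hτc1]
    have r1 : ρ⁻¹ * κ ^ (-(k 0 : ℤ)) * (τ 0 / τc a)
        = κ ^ (-(k 0 : ℤ)) * (ρ⁻¹ * (τ 0 / τc a)) := by ring
    have r2 : ρ⁻¹ * κ ^ (-(k 1 : ℤ)) * (c / τc a)
        = κ ^ (-(k 1 : ℤ)) * (κ ^ p * (ρ⁻¹ * (τ 0 / τc a))) := by rw [hcdef]; ring
    have r3 : ρ⁻¹ * κ ^ (-(α : ℤ)) * (τ 0 / τc a)
        = κ ^ (-(α : ℤ)) * (ρ⁻¹ * (τ 0 / τc a)) := by ring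
    have r4 : ρ⁻¹ * κ ^ (-(β : ℤ)) * (c / τc a)
        = κ ^ (-(β : ℤ)) * (κ ^ p * (ρ⁻¹ * (τ 0 / τc a))) := by rw [hcdef]; ring
    rw [r1, r2, r3, r4]
    exact (swap_br κ hκ0 (ρ⁻¹ * (τ 0 / τc a)) (k 0) (k 1) α β (k a) p hα hβ).symm
  have E3 : ∏ a ∈ Tset n,
        br κ (ρ⁻¹ * κ ^ (-(k' a : ℤ)) * (τc a / τc 0)) (k' 0) *
          br κ (ρ⁻¹ * κ ^ (-(k' a : ℤ)) * (τc a / τc 1)) (k' 1)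
      = ∏ a ∈ Tset n,
        br κ (ρ⁻¹ * κ ^ (-(k a : ℤ)) * (τc a / τc 0)) (k 0) *
          br κ (ρ⁻¹ * κ ^ (-(k a : ℤ)) * (τc a / τc 1)) (k 1) := by
    refine Finset.prod_congr rfl fun a ha => ?_
    rw [hk'T a ha, hk'0, hk'1, hτc0, hτc1]
    have r2 : ρ⁻¹ * κ ^ (-(k a : ℤ)) * (τc a / c)
        = κ ^ (-p) * (ρ⁻¹ * κ ^ (-(k a : ℤ)) * (τc a / τ 0)) := by
      rw [hcdef]; simp only [zpow_neg]; ring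
    rw [r2]
    exact (L1br κ hκ0 (ρ⁻¹ * κ ^ (-(k a : ℤ)) * (τc a / τ 0)) (k 0) (k 1) α β p hα hβ).symm
  have E4 : ∏ a ∈ Tset n, ∏ b ∈ (Tset n).erase a,
        br κ (ρ⁻¹ * κ ^ (-(k' a : ℤ)) * (τc a / τc b)) (k' b)
      = ∏ a ∈ Tset n, ∏ b ∈ (Tset n).erase a,
        br κ (ρ⁻¹ * κ ^ (-(k a : ℤ)) * (τc a / τc b)) (k b) := by
    refine Finset.prod_congr rfl fun a ha => Finset.prod_congr rfl fun b hb => ?_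
    rw [hk'T a ha, hk'T b (Finset.mem_of_mem_erase hb)]
  have E6 : ∏ a ∈ Tset n, ∏ j, br κ (ρ * σ j / τc a) (k' a)
      = ∏ a ∈ Tset n, ∏ j, br κ (ρ * σ j / τc a) (k a) :=
    Finset.prod_congr rfl fun a ha => by rw [hk'T a ha]
  have E5 : (∏ j, br κ (ρ * σ j / τc 0) (k' 0)) * (∏ j, br κ (ρ * σ j / τc 1) (k' 1))
      = (∏ j, br κ (ρ * σ j / τc 0) (k 0)) * (∏ j, br κ (ρ * σ j / τc 1) (k 1)) := by
    rw [← Finset.prod_mul_distrib, ← Finset.prod_mul_distrib]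
    refine Finset.prod_congr rfl fun j _ => ?_
    rw [hk'0, hk'1, hτc0, hτc1]
    have r2 : ρ * σ j / c = κ ^ (-p) * (ρ * σ j / τ 0) := by
      rw [hcdef]; simp only [zpow_neg]; ring
    rw [r2]
    exact (L1br κ hκ0 (ρ * σ j / τ 0) (k 0) (k 1) α β p hα hβ).symm
  have E1 : br κ (κ * ρ) (k' 0) * br κ (κ * ρ) (k' 1) *
        (br κ (ρ⁻¹ * κ ^ (-(k' 0 : ℤ)) * (τc 0 / τc 1)) (k' 1) *
          br κ (ρ⁻¹ * κ ^ (-(k' 1 : ℤ)) * (τc 1 / τc 0)) (k' 0))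
      = br κ (κ * ρ) (k 0) * br κ (κ * ρ) (k 1) *
        (br κ (ρ⁻¹ * κ ^ (-(k 0 : ℤ)) * (τc 0 / τc 1)) (k 1) *
          br κ (ρ⁻¹ * κ ^ (-(k 1 : ℤ)) * (τc 1 / τc 0)) (k 0)) := by
    rw [hk'0, hk'1, hτc0, hτc1]
    have hκp : (κ : ℂ) ^ p ≠ 0 := zpow_ne_zero p hκ0
    have d1 : τ 0 / c = (κ ^ p)⁻¹ := by
      rw [hcdef, mul_comm, div_mul_eq_div_div, div_self hτ0, one_div]
    have d2 : c / τ 0 = κ ^ p := by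
      rw [hcdef, mul_div_assoc, div_self hτ0, mul_one]
    have r1 : ρ⁻¹ * κ ^ (-(k 0 : ℤ)) * (τ 0 / c) = κ ^ (-(β:ℤ)) * ρ⁻¹ := by
      rw [d1, ← zpow_neg, show -(β:ℤ) = -(k 0:ℤ) + -p by omega, zpow_add₀ hκ0]; ring
    have r2 : ρ⁻¹ * κ ^ (-(k 1 : ℤ)) * (c / τ 0) = κ ^ (-(α:ℤ)) * ρ⁻¹ := by
      rw [d2, show -(α:ℤ) = -(k 1:ℤ) + p by omega, zpow_add₀ hκ0]; ring
    have r1' : ρ⁻¹ * κ ^ (-(α : ℤ)) * (τ 0 / c) = κ ^ (-(k 1:ℤ)) * ρ⁻¹ := by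
      rw [d1, ← zpow_neg, show -(k 1:ℤ) = -(α:ℤ) + -p by omega, zpow_add₀ hκ0]; ring
    have r2' : ρ⁻¹ * κ ^ (-(β : ℤ)) * (c / τ 0) = κ ^ (-(k 0:ℤ)) * ρ⁻¹ := by
      rw [d2, show -(k 0:ℤ) = -(β:ℤ) + p by omega, zpow_add₀ hκ0]; ring
    have rκρ : κ * ρ = κ ^ (1:ℤ) * ρ := by rw [zpow_one]
    rw [r1, r2, r1', r2', rκρ]
    have := L2br κ ρ hκ0 (k 0) (k 1) α β p hα hβ h1
    linear_combination -this
  rw [E0, E2, E3, E4, E6]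
  linear_combination
    ((∏ a ∈ Tset n, br κ (κ * ρ) (k a)) *
      (∏ a ∈ Tset n,
        br κ (ρ⁻¹ * κ ^ (-(k 0 : ℤ)) * (τc 0 / τc a)) (k a) *
          br κ (ρ⁻¹ * κ ^ (-(k 1 : ℤ)) * (τc 1 / τc a)) (k a)) *
      (∏ a ∈ Tset n,
        br κ (ρ⁻¹ * κ ^ (-(k a : ℤ)) * (τc a / τc 0)) (k 0) *
          br κ (ρ⁻¹ * κ ^ (-(k a : ℤ)) * (τc a / τc 1)) (k 1)) *
      (∏ a ∈ Tset n, ∏ b ∈ (Tset n).erase a,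
        br κ (ρ⁻¹ * κ ^ (-(k a : ℤ)) * (τc a / τc b)) (k b)) *
      (∏ a ∈ Tset n, ∏ j, br κ (ρ * σ j / τc a) (k a)) *
      ((∏ j, br κ (ρ * σ j / τc 0) (k' 0)) * (∏ j, br κ (ρ * σ j / τc 1) (k' 1)))) * E1 +
    ((∏ a ∈ Tset n, br κ (κ * ρ) (k a)) *
      (∏ a ∈ Tset n,
        br κ (ρ⁻¹ * κ ^ (-(k 0 : ℤ)) * (τc 0 / τc a)) (k a) *
          br κ (ρ⁻¹ * κ ^ (-(k 1 : ℤ)) * (τc 1 / τc a)) (k a)) *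
      (∏ a ∈ Tset n,
        br κ (ρ⁻¹ * κ ^ (-(k a : ℤ)) * (τc a / τc 0)) (k 0) *
          br κ (ρ⁻¹ * κ ^ (-(k a : ℤ)) * (τc a / τc 1)) (k 1)) *
      (∏ a ∈ Tset n, ∏ b ∈ (Tset n).erase a,
        br κ (ρ⁻¹ * κ ^ (-(k a : ℤ)) * (τc a / τc b)) (k b)) *
      (∏ a ∈ Tset n, ∏ j, br κ (ρ * σ j / τc a) (k a)) *
      (br κ (κ * ρ) (k 0) * br κ (κ * ρ) (k 1) *
        (br κ (ρ⁻¹ * κ ^ (-(k 0 : ℤ)) * (τc 0 / τc 1)) (k 1) *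
          br κ (ρ⁻¹ * κ ^ (-(k 1 : ℤ)) * (τc 1 / τc 0)) (k 0)))) * E5


lemma erase01 {n : ℕ} : (Finset.univ.erase (0 : Fin (n+2))).erase 1 = Tset n := rfl

lemma DenE_identity {n : ℕ} (κ : ℂ) (hκ0 : κ ≠ 0)
    (σ τ : Fin (n+2) → ℂ) (k : Fin (n+2) → ℕ) (p : ℤ)
    (hτ0 : τ 0 ≠ 0)
    (h1 : (k 1 : ℤ) + 1 ≤ (k 0 : ℤ) + p) (h2 : p ≤ (k 1 : ℤ)) :
    DenE κ (Function.update (Function.update k 0 ((k 1 : ℤ) - p).toNat) 1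
        ((k 0 : ℤ) + p).toNat) σ (Function.update τ 1 (κ ^ p * τ 0)) 0 1 (k 1)
      = DenE κ k σ (Function.update τ 1 (κ ^ p * τ 0)) 1 0 ((k 1 : ℤ) - p).toNat := by
  set α : ℕ := ((k 1 : ℤ) - p).toNat with hαdef
  set β : ℕ := ((k 0 : ℤ) + p).toNat with hβdef
  have hα : (α : ℤ) = (k 1 : ℤ) - p := Int.toNat_of_nonneg (by omega)
  have hβ : (β : ℤ) = (k 0 : ℤ) + p := Int.toNat_of_nonneg (by omega)
  set c : ℂ := κ ^ p * τ 0 with hcdef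
  set τc : Fin (n+2) → ℂ := Function.update τ 1 c with hτcdef
  set k' : Fin (n+2) → ℕ := Function.update (Function.update k 0 α) 1 β with hk'def
  have hτc0 : τc 0 = τ 0 := Function.update_of_ne ne01 _ _
  have hτc1 : τc 1 = c := Function.update_self _ _ _
  have hτcT : ∀ a ∈ Tset n, τc a = τ a := fun a ha =>
    Function.update_of_ne (mem_Tset.1 ha).2 _ _
  have hk'0 : k' 0 = α := by
    rw [hk'def, Function.update_of_ne ne01, Function.update_self]
  have hk'1 : k' 1 = β := Function.update_self _ _ _
  have hk'T : ∀ a ∈ Tset n, k' a = k a := by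
    intro a ha
    rw [hk'def, Function.update_of_ne (mem_Tset.1 ha).2, Function.update_of_ne (mem_Tset.1 ha).1]
  have hκp : (κ : ℂ) ^ p ≠ 0 := zpow_ne_zero p hκ0
  have d1 : τ 0 / c = (κ ^ p)⁻¹ := by
    rw [hcdef, mul_comm, div_mul_eq_div_div, div_self hτ0, one_div]
  have d2 : c / τ 0 = κ ^ p := by
    rw [hcdef, mul_div_assoc, div_self hτ0, mul_one]
  unfold DenE
  rw [erase01, erase10]
  rw [prodA_split (fun a => br κ κ (k' a)), prodA_split (fun a => br κ κ (k a)),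
    prodB_split_erase0 (fun a b => br κ (κ ^ (-(k' a : ℤ)) * (τc a / τc b)) (k' b)),
    prodB_split_erase1 (fun a b => br κ (κ ^ (-(k a : ℤ)) * (τc a / τc b)) (k b)),
    prodA_split (fun a => ∏ j, br κ (σ j / τc a) (k' a)),
    prodA_split (fun a => ∏ j, br κ (σ j / τc a) (k a))]
  -- chunk equalities
  have ED0 : ∏ a ∈ Tset n, br κ κ (k' a) = ∏ a ∈ Tset n, br κ κ (k a) :=
    Finset.prod_congr rfl fun a ha => by rw [hk'T a ha]
  have EDGB : ∏ a ∈ Tset n,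
        br κ (κ ^ (-(k' a : ℤ)) * (τc a / τc 0)) (k' 0) *
          br κ (κ ^ (-(k' a : ℤ)) * (τc a / τc 1)) (k' 1)
      = ∏ a ∈ Tset n,
        br κ (κ ^ (-(k a : ℤ)) * (τc a / τc 0)) (k 0) *
          br κ (κ ^ (-(k a : ℤ)) * (τc a / τc 1)) (k 1) := by
    refine Finset.prod_congr rfl fun a ha => ?_
    rw [hk'T a ha, hk'0, hk'1, hτc0, hτc1]
    have r2 : κ ^ (-(k a : ℤ)) * (τc a / c)
        = κ ^ (-p) * (κ ^ (-(k a : ℤ)) * (τc a / τ 0)) := by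
      rw [hcdef]; simp only [zpow_neg]; ring
    rw [r2]
    exact (L1br κ hκ0 (κ ^ (-(k a : ℤ)) * (τc a / τ 0)) (k 0) (k 1) α β p hα hβ).symm
  have EDGO : ∏ a ∈ Tset n, ∏ b ∈ (Tset n).erase a,
        br κ (κ ^ (-(k' a : ℤ)) * (τc a / τc b)) (k' b)
      = ∏ a ∈ Tset n, ∏ b ∈ (Tset n).erase a,
        br κ (κ ^ (-(k a : ℤ)) * (τc a / τc b)) (k b) := by
    refine Finset.prod_congr rfl fun a ha => Finset.prod_congr rfl fun b hb => ?_
    rw [hk'T a ha, hk'T b (Finset.mem_of_mem_erase hb)]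
  have EDHT : ∏ a ∈ Tset n, ∏ j, br κ (σ j / τc a) (k' a)
      = ∏ a ∈ Tset n, ∏ j, br κ (σ j / τc a) (k a) :=
    Finset.prod_congr rfl fun a ha => by rw [hk'T a ha]
  have EDT3 : (∏ j, br κ (σ j / τc 0) (k' 0)) * (∏ j, br κ (σ j / τc 1) (k' 1))
      = (∏ j, br κ (σ j / τc 0) (k 0)) * (∏ j, br κ (σ j / τc 1) (k 1)) := by
    rw [← Finset.prod_mul_distrib, ← Finset.prod_mul_distrib]
    refine Finset.prod_congr rfl fun j _ => ?_
    rw [hk'0, hk'1, hτc0, hτc1]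
    have r2 : σ j / c = κ ^ (-p) * (σ j / τ 0) := by
      rw [hcdef]; simp only [zpow_neg]; ring
    rw [r2]
    exact (L1br κ hκ0 (σ j / τ 0) (k 0) (k 1) α β p hα hβ).symm
  have EDswap : (∏ b ∈ Tset n, br κ (κ ^ (-(k' 0 : ℤ)) * (τc 0 / τc b)) (k' b)) *
        (∏ a ∈ Tset n, br κ (κ ^ (-(k' 1 : ℤ)) * (τc 1 / τc a)) (k' a))
      = (∏ b ∈ Tset n, br κ (κ ^ (-(k 1 : ℤ)) * (τc 1 / τc b)) (k b)) *
        (∏ a ∈ Tset n, br κ (κ ^ (-(k 0 : ℤ)) * (τc 0 / τc a)) (k a)) := by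
    rw [← Finset.prod_mul_distrib, ← Finset.prod_mul_distrib]
    refine Finset.prod_congr rfl fun a ha => ?_
    rw [hk'T a ha, hk'0, hk'1, hτc0, hτc1]
    have r1 : κ ^ (-(k 1 : ℤ)) * (c / τc a)
        = κ ^ (-(k 1 : ℤ)) * (κ ^ p * (τ 0 / τc a)) := by rw [hcdef]; ring
    have r2 : κ ^ (-(β : ℤ)) * (c / τc a)
        = κ ^ (-(β : ℤ)) * (κ ^ p * (τ 0 / τc a)) := by rw [hcdef]; ring
    rw [r1, r2]
    have := swap_br κ hκ0 (τ 0 / τc a) (k 0) (k 1) α β (k a) p hα hβ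
    linear_combination -this
  have EDcore : br κ κ (k' 0) * br κ κ (k' 1) *
        (brE κ (κ ^ (-(k' 0 : ℤ)) * (τc 0 / τc 1)) (k' 1) (k 1) *
          br κ (κ ^ (-(k' 1 : ℤ)) * (τc 1 / τc 0)) (k' 0))
      = br κ κ (k 0) * br κ κ (k 1) *
        (brE κ (κ ^ (-(k 1 : ℤ)) * (τc 1 / τc 0)) (k 0) α *
          br κ (κ ^ (-(k 0 : ℤ)) * (τc 0 / τc 1)) (k 1)) := by
    rw [hk'0, hk'1, hτc0, hτc1]
    have r1 : κ ^ (-(k 1 : ℤ)) * (c / τ 0) = κ ^ (-(α:ℤ)) * 1 := by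
      rw [d2, ← zpow_add₀ hκ0, show -(k 1:ℤ) + p = -(α:ℤ) by omega, mul_one]
    have r2 : κ ^ (-(k 0 : ℤ)) * (τ 0 / c) = κ ^ (-(β:ℤ)) * 1 := by
      rw [d1, ← zpow_neg, ← zpow_add₀ hκ0, show -(k 0:ℤ) + -p = -(β:ℤ) by omega, mul_one]
    have r1' : κ ^ (-(α : ℤ)) * (τ 0 / c) = κ ^ (-(k 1:ℤ)) * 1 := by
      rw [d1, ← zpow_neg, ← zpow_add₀ hκ0, show -(α:ℤ) + -p = -(k 1:ℤ) by omega, mul_one]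
    have r2' : κ ^ (-(β : ℤ)) * (c / τ 0) = κ ^ (-(k 0:ℤ)) * 1 := by
      rw [d2, ← zpow_add₀ hκ0, show -(β:ℤ) + p = -(k 0:ℤ) by omega, mul_one]
    rw [r1, r2, r1', r2']
    have := L3br κ hκ0 (k 0) (k 1) α β p hα hβ h1
    linear_combination -this
  rw [ED0, EDGB, EDGO, EDHT]
  linear_combination
    ((∏ a ∈ Tset n, br κ κ (k a)) *
      (∏ a ∈ Tset n,
        br κ (κ ^ (-(k a : ℤ)) * (τc a / τc 0)) (k 0) *
          br κ (κ ^ (-(k a : ℤ)) * (τc a / τc 1)) (k 1)) *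
      (∏ a ∈ Tset n, ∏ b ∈ (Tset n).erase a,
        br κ (κ ^ (-(k a : ℤ)) * (τc a / τc b)) (k b)) *
      (∏ a ∈ Tset n, ∏ j, br κ (σ j / τc a) (k a)) *
      ((∏ b ∈ Tset n, br κ (κ ^ (-(k' 0 : ℤ)) * (τc 0 / τc b)) (k' b)) *
        (∏ a ∈ Tset n, br κ (κ ^ (-(k' 1 : ℤ)) * (τc 1 / τc a)) (k' a))) *
      ((∏ j, br κ (σ j / τc 0) (k' 0)) * (∏ j, br κ (σ j / τc 1) (k' 1)))) * EDcore +
    ((∏ a ∈ Tset n, br κ κ (k a)) *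
      (∏ a ∈ Tset n,
        br κ (κ ^ (-(k a : ℤ)) * (τc a / τc 0)) (k 0) *
          br κ (κ ^ (-(k a : ℤ)) * (τc a / τc 1)) (k 1)) *
      (∏ a ∈ Tset n, ∏ b ∈ (Tset n).erase a,
        br κ (κ ^ (-(k a : ℤ)) * (τc a / τc b)) (k b)) *
      (∏ a ∈ Tset n, ∏ j, br κ (σ j / τc a) (k a)) *
      (br κ κ (k 0) * br κ κ (k 1) *
        (brE κ (κ ^ (-(k 1 : ℤ)) * (τc 1 / τc 0)) (k 0) α *
          br κ (κ ^ (-(k 0 : ℤ)) * (τc 0 / τc 1)) (k 1))) *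
      ((∏ j, br κ (σ j / τc 0) (k' 0)) * (∏ j, br κ (σ j / τc 1) (k' 1)))) * EDswap +
    ((∏ a ∈ Tset n, br κ κ (k a)) *
      (∏ a ∈ Tset n,
        br κ (κ ^ (-(k a : ℤ)) * (τc a / τc 0)) (k 0) *
          br κ (κ ^ (-(k a : ℤ)) * (τc a / τc 1)) (k 1)) *
      (∏ a ∈ Tset n, ∏ b ∈ (Tset n).erase a,
        br κ (κ ^ (-(k a : ℤ)) * (τc a / τc b)) (k b)) *
      (∏ a ∈ Tset n, ∏ j, br κ (σ j / τc a) (k a)) *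
      (br κ κ (k 0) * br κ κ (k 1) *
        (brE κ (κ ^ (-(k 1 : ℤ)) * (τc 1 / τc 0)) (k 0) α *
          br κ (κ ^ (-(k 0 : ℤ)) * (τc 0 / τc 1)) (k 1))) *
      ((∏ b ∈ Tset n, br κ (κ ^ (-(k 1 : ℤ)) * (τc 1 / τc b)) (k b)) *
        (∏ a ∈ Tset n, br κ (κ ^ (-(k 0 : ℤ)) * (τc 0 / τc a)) (k a)))) * EDT3

section nz

lemma sq_zpow (κ : ℂ) (p : ℤ) : (κ ^ p) ^ 2 = (κ ^ 2) ^ p := by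
  rw [← zpow_natCast (κ ^ p) 2, ← zpow_mul, ← zpow_natCast κ 2, ← zpow_mul, mul_comm]

lemma factor_ne_zero (κ ζ : ℂ) (hκ : κ ≠ 0) (hζ : ζ ≠ 0) (l : ℕ)
    (h : ζ ^ 2 ≠ (κ ^ 2) ^ (-(l:ℤ))) :
    κ ^ l * ζ - κ ^ (-(l:ℤ)) * ζ⁻¹ ≠ 0 := by
  intro he
  apply h
  have hκl : (κ:ℂ) ^ (l:ℕ) ≠ 0 := pow_ne_zero _ hκ
  have h3 : κ ^ (l:ℕ) * ζ = κ ^ (-(l:ℤ)) * ζ⁻¹ := by linear_combination he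
  have h4 : ζ ^ 2 = κ ^ (-(l:ℤ)) * (κ ^ (l:ℕ))⁻¹ := by
    field_simp at h3
    rw [sq]
    field_simp
    linear_combination h3
  rw [h4, ← zpow_natCast κ l, ← zpow_neg, ← zpow_add₀ hκ, ← zpow_natCast κ 2, ← zpow_mul]
  congr 1
  omega

lemma br_ne_zero (κ ζ : ℂ) (hκ : κ ≠ 0) (hζ : ζ ≠ 0) (m : ℕ)
    (h : ∀ l : ℕ, l < m → ζ ^ 2 ≠ (κ ^ 2) ^ (-(l:ℤ))) : br κ ζ m ≠ 0 :=
  Finset.prod_ne_zero_iff.2 fun l hl =>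
    factor_ne_zero κ ζ hκ hζ l (h l (Finset.mem_range.1 hl))

lemma brE_ne_zero (κ ζ : ℂ) (hκ : κ ≠ 0) (hζ : ζ ≠ 0) (m j : ℕ)
    (h : ∀ l : ℕ, l < m → l ≠ j → ζ ^ 2 ≠ (κ ^ 2) ^ (-(l:ℤ))) : brE κ ζ m j ≠ 0 :=
  Finset.prod_ne_zero_iff.2 fun l hl =>
    factor_ne_zero κ ζ hκ hζ l
      (h l (Finset.mem_range.1 (Finset.mem_of_mem_erase hl)) (Finset.mem_erase.1 hl).1)

lemma qpow_ne_one (κ : ℂ) (hκ : ∀ m : ℕ, 1 ≤ m → κ ^ (2 * m) ≠ 1) :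
    ∀ m : ℤ, m ≠ 0 → (κ ^ 2) ^ m ≠ 1 := by
  have hpos : ∀ m : ℕ, 1 ≤ m → (κ ^ 2) ^ (m : ℤ) ≠ 1 := by
    intro m hm
    rw [zpow_natCast, ← pow_mul]
    exact hκ m hm
  intro m hm
  rcases lt_or_gt_of_ne hm with h | h
  · intro he
    have : ((κ ^ 2) ^ ((-m).toNat : ℤ)) ≠ 1 := hpos _ (by omega)
    apply this
    rw [show ((-m).toNat : ℤ) = -m by omega, zpow_neg, he, inv_one]
  · have := hpos m.toNat (by omega)
    rwa [show ((m.toNat : ℤ)) = m by omega] at this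

lemma qpow_inj (κ : ℂ) (hκ0 : κ ≠ 0) (hκ : ∀ m : ℕ, 1 ≤ m → κ ^ (2 * m) ≠ 1) :
    ∀ m m' : ℤ, m ≠ m' → (κ ^ 2) ^ m ≠ (κ ^ 2) ^ m' := by
  intro m m' hmm he
  have h2 : (κ ^ 2 : ℂ) ≠ 0 := pow_ne_zero _ hκ0
  apply qpow_ne_one κ hκ (m - m') (by omega)
  rw [zpow_sub₀ h2, he, div_self (zpow_ne_zero _ h2)]

end nz

section nz2

lemma cancel_zpow (κ : ℂ) (hκ0 : κ ≠ 0) (s e : ℤ) (w : ℂ)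
    (h : (κ ^ 2) ^ s * w = (κ ^ 2) ^ e) : w = (κ ^ 2) ^ (e - s) := by
  have h2 : (κ ^ 2 : ℂ) ≠ 0 := pow_ne_zero _ hκ0
  calc w = ((κ ^ 2) ^ s)⁻¹ * ((κ ^ 2) ^ s * w) := by
        rw [inv_mul_cancel_left₀ (zpow_ne_zero s h2)]
    _ = ((κ ^ 2) ^ s)⁻¹ * (κ ^ 2) ^ e := by rw [h]
    _ = (κ ^ 2) ^ (e - s) := by
        rw [← zpow_neg, ← zpow_add₀ h2]; congr 1; ring

lemma brT2_ne (κ : ℂ) (hκ0 : κ ≠ 0) (x y : ℂ) (hx : x ≠ 0) (hy : y ≠ 0) (s : ℤ) (m : ℕ)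
    (h : ∀ l : ℕ, l < m → x ^ 2 / y ^ 2 ≠ (κ ^ 2) ^ (-(l:ℤ) - s)) :
    br κ (κ ^ s * (x / y)) m ≠ 0 := by
  apply br_ne_zero κ _ hκ0 (mul_ne_zero (zpow_ne_zero s hκ0) (div_ne_zero hx hy)) m
  intro l hl he
  apply h l hl
  rw [mul_pow, div_pow, sq_zpow] at he
  exact cancel_zpow κ hκ0 s _ _ he

lemma brE2_ne (κ : ℂ) (hκ0 : κ ≠ 0) (x y : ℂ) (hx : x ≠ 0) (hy : y ≠ 0) (s : ℤ) (m j : ℕ)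
    (h : ∀ l : ℕ, l < m → l ≠ j → x ^ 2 / y ^ 2 ≠ (κ ^ 2) ^ (-(l:ℤ) - s)) :
    brE κ (κ ^ s * (x / y)) m j ≠ 0 := by
  apply brE_ne_zero κ _ hκ0 (mul_ne_zero (zpow_ne_zero s hκ0) (div_ne_zero hx hy)) m j
  intro l hl hlj he
  apply h l hl hlj
  rw [mul_pow, div_pow, sq_zpow] at he
  exact cancel_zpow κ hκ0 s _ _ he

lemma brT3_ne (κ : ℂ) (hκ0 : κ ≠ 0) (x y : ℂ) (hx : x ≠ 0) (hy : y ≠ 0) (m : ℕ)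
    (h : ∀ l : ℕ, l < m → x ^ 2 / y ^ 2 ≠ (κ ^ 2) ^ (-(l:ℤ))) :
    br κ (x / y) m ≠ 0 := by
  apply br_ne_zero κ _ hκ0 (div_ne_zero hx hy) m
  intro l hl he
  apply h l hl
  rw [div_pow] at he
  exact he

lemma brT1_ne (κ : ℂ) (hκ0 : κ ≠ 0) (hκ : ∀ m : ℕ, 1 ≤ m → κ ^ (2 * m) ≠ 1) (m : ℕ) :
    br κ κ m ≠ 0 := by
  apply br_ne_zero κ κ hκ0 hκ0 m
  intro l _ he
  have : ((κ:ℂ) ^ 2) ^ (1:ℤ) = (κ ^ 2) ^ (-(l:ℤ)) := by rw [zpow_one]; exact he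
  exact qpow_inj κ hκ0 hκ 1 (-(l:ℤ)) (by omega) this

/-- ratio through `c = κ^p * τ0` in the numerator -/
lemma c_num_shift (κ : ℂ) (hκ0 : κ ≠ 0) (u y : ℂ) (p e : ℤ)
    (h : (κ ^ p * u) ^ 2 / y ^ 2 = (κ ^ 2) ^ e) : u ^ 2 / y ^ 2 = (κ ^ 2) ^ (e - p) := by
  apply cancel_zpow κ hκ0 p e
  rw [← h, mul_pow, sq_zpow, mul_div_assoc]

/-- ratio through `c = κ^p * τ0` in the denominator -/
lemma c_den_shift (κ : ℂ) (hκ0 : κ ≠ 0) (x u : ℂ) (p e : ℤ)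
    (h : x ^ 2 / (κ ^ p * u) ^ 2 = (κ ^ 2) ^ e) : x ^ 2 / u ^ 2 = (κ ^ 2) ^ (e + p) := by
  have h2 : (κ ^ 2 : ℂ) ≠ 0 := pow_ne_zero _ hκ0
  have hp : ((κ:ℂ) ^ 2) ^ p ≠ 0 := zpow_ne_zero _ h2
  have : x ^ 2 / u ^ 2 = (κ ^ 2) ^ p * (x ^ 2 / ((κ ^ 2) ^ p * u ^ 2)) := by
    rw [mul_div_assoc', mul_div_mul_left _ _ hp]
  rw [this, show (κ ^ 2:ℂ) ^ p * u ^ 2 = (κ ^ p * u)^2 by rw [mul_pow, sq_zpow], h,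
    ← zpow_add₀ h2]
  congr 1; ring

end nz2

lemma DenE_k_ne {n : ℕ} (κ : ℂ) (hκ0 : κ ≠ 0)
    (hκ : ∀ m : ℕ, 1 ≤ m → κ ^ (2*m) ≠ 1)
    (σ τ : Fin (n+2) → ℂ) (hσ : ∀ i, σ i ≠ 0) (hτ : ∀ a : Fin (n+2), a ≠ 1 → τ a ≠ 0)
    (hττ : ∀ a b : Fin (n+2), a ≠ 1 → b ≠ 1 → a ≠ b → ∀ m : ℤ,
      (τ a)^2/(τ b)^2 ≠ (κ^2)^m)
    (hστ : ∀ j a : Fin (n+2), a ≠ 1 → ∀ m : ℤ, (σ j)^2/(τ a)^2 ≠ (κ^2)^m)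
    (k : Fin (n+2) → ℕ) (p : ℤ)
    (h1 : (k 1:ℤ) + 1 ≤ (k 0:ℤ) + p) (h2 : p ≤ (k 1:ℤ)) :
    DenE κ k σ (Function.update τ 1 (κ ^ p * τ 0)) 1 0 ((k 1:ℤ) - p).toNat ≠ 0 := by
  set α : ℕ := ((k 1 : ℤ) - p).toNat with hαdef
  have hα : (α : ℤ) = (k 1 : ℤ) - p := Int.toNat_of_nonneg (by omega)
  set c : ℂ := κ ^ p * τ 0 with hcdef
  set τc : Fin (n+2) → ℂ := Function.update τ 1 c with hτcdef
  have hτ0 : τ 0 ≠ 0 := hτ 0 ne01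
  have hc : c ≠ 0 := mul_ne_zero (zpow_ne_zero _ hκ0) hτ0
  have hτc0 : τc 0 = τ 0 := Function.update_of_ne ne01 _ _
  have hτc1 : τc 1 = c := Function.update_self _ _ _
  have hτcn : ∀ b : Fin (n+2), b ≠ 1 → τc b = τ b := fun b hb =>
    Function.update_of_ne hb _ _
  unfold DenE
  refine mul_ne_zero (mul_ne_zero ?hA (mul_ne_zero (mul_ne_zero ?hE ?hrow) ?hbig)) ?hD
  · exact Finset.prod_ne_zero_iff.2 fun a _ => brT1_ne κ hκ0 hκ _
  · rw [hτc1, hτc0]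
    refine brE2_ne κ hκ0 c (τ 0) hc hτ0 _ _ _ fun l hl hlα he => ?_
    rw [hcdef] at he
    have h' := c_num_shift κ hκ0 (τ 0) (τ 0) p _ he
    apply qpow_ne_one κ hκ (-(l:ℤ) - -(k 1:ℤ) - p) (by omega)
    rw [← h', div_self (pow_ne_zero 2 hτ0)]
  · refine Finset.prod_ne_zero_iff.2 fun b hb => ?_
    have hb0 : b ≠ 0 := (Finset.mem_erase.1 hb).1
    have hb1 : b ≠ 1 := (Finset.mem_erase.1 (Finset.mem_of_mem_erase hb)).1
    rw [hτc1, hτcn b hb1]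
    refine brT2_ne κ hκ0 c (τ b) hc (hτ b hb1) _ _ fun l hl he => ?_
    rw [hcdef] at he
    exact hττ 0 b ne01 hb1 (Ne.symm hb0) _ (c_num_shift κ hκ0 (τ 0) (τ b) p _ he)
  · refine Finset.prod_ne_zero_iff.2 fun a ha => Finset.prod_ne_zero_iff.2 fun b hb => ?_
    have ha1 : a ≠ 1 := (Finset.mem_erase.1 ha).1
    have hba : b ≠ a := (Finset.mem_erase.1 hb).1
    by_cases hb1 : b = 1
    · subst hb1
      rw [hτc1, hτcn a ha1]
      refine brT2_ne κ hκ0 (τ a) c (hτ a ha1) hc _ _ fun l hl he => ?_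
      rw [hcdef] at he
      have h' := c_den_shift κ hκ0 (τ a) (τ 0) p _ he
      by_cases ha0 : a = 0
      · subst ha0
        apply qpow_ne_one κ hκ (-(l:ℤ) - -(k 0:ℤ) + p) (by omega)
        rw [← h', div_self (pow_ne_zero 2 hτ0)]
      · exact hττ a 0 ha1 ne01 ha0 _ h'
    · rw [hτcn a ha1, hτcn b hb1]
      exact brT2_ne κ hκ0 (τ a) (τ b) (hτ a ha1) (hτ b hb1) _ _ fun l hl =>
        hττ a b ha1 hb1 (Ne.symm hba) _
  · refine Finset.prod_ne_zero_iff.2 fun a _ => Finset.prod_ne_zero_iff.2 fun j _ => ?_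
    by_cases ha1 : a = 1
    · subst ha1
      rw [hτc1, hcdef]
      refine brT3_ne κ hκ0 (σ j) (κ ^ p * τ 0) (hσ j) (by rw [← hcdef]; exact hc) _
        fun l hl he => ?_
      exact hστ j 0 ne01 _ (c_den_shift κ hκ0 (σ j) (τ 0) p _ he)
    · rw [hτcn a ha1]
      exact brT3_ne κ hκ0 (σ j) (τ a) (hσ j) (hτ a ha1) _ fun l hl => hστ j a ha1 _

lemma DenE_kp_ne {n : ℕ} (κ : ℂ) (hκ0 : κ ≠ 0)
    (hκ : ∀ m : ℕ, 1 ≤ m → κ ^ (2*m) ≠ 1)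
    (σ τ : Fin (n+2) → ℂ) (hσ : ∀ i, σ i ≠ 0) (hτ : ∀ a : Fin (n+2), a ≠ 1 → τ a ≠ 0)
    (hττ : ∀ a b : Fin (n+2), a ≠ 1 → b ≠ 1 → a ≠ b → ∀ m : ℤ,
      (τ a)^2/(τ b)^2 ≠ (κ^2)^m)
    (hστ : ∀ j a : Fin (n+2), a ≠ 1 → ∀ m : ℤ, (σ j)^2/(τ a)^2 ≠ (κ^2)^m)
    (k : Fin (n+2) → ℕ) (p : ℤ)
    (h1 : (k 1:ℤ) + 1 ≤ (k 0:ℤ) + p) (h2 : p ≤ (k 1:ℤ)) :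
    DenE κ (Function.update (Function.update k 0 ((k 1 : ℤ) - p).toNat) 1
        ((k 0 : ℤ) + p).toNat) σ (Function.update τ 1 (κ ^ p * τ 0)) 0 1 (k 1) ≠ 0 := by
  set α : ℕ := ((k 1 : ℤ) - p).toNat with hαdef
  set β : ℕ := ((k 0 : ℤ) + p).toNat with hβdef
  have hα : (α : ℤ) = (k 1 : ℤ) - p := Int.toNat_of_nonneg (by omega)
  have hβ : (β : ℤ) = (k 0 : ℤ) + p := Int.toNat_of_nonneg (by omega)
  set c : ℂ := κ ^ p * τ 0 with hcdef
  set τc : Fin (n+2) → ℂ := Function.update τ 1 c with hτcdef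
  set k' : Fin (n+2) → ℕ := Function.update (Function.update k 0 α) 1 β with hk'def
  have hτ0 : τ 0 ≠ 0 := hτ 0 ne01
  have hc : c ≠ 0 := mul_ne_zero (zpow_ne_zero _ hκ0) hτ0
  have hτc0 : τc 0 = τ 0 := Function.update_of_ne ne01 _ _
  have hτc1 : τc 1 = c := Function.update_self _ _ _
  have hτcn : ∀ b : Fin (n+2), b ≠ 1 → τc b = τ b := fun b hb =>
    Function.update_of_ne hb _ _
  have hk'0 : k' 0 = α := by
    rw [hk'def, Function.update_of_ne ne01, Function.update_self]
  have hk'1 : k' 1 = β := Function.update_self _ _ _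
  unfold DenE
  refine mul_ne_zero (mul_ne_zero ?hA (mul_ne_zero (mul_ne_zero ?hE ?hrow) ?hbig)) ?hD
  · exact Finset.prod_ne_zero_iff.2 fun a _ => brT1_ne κ hκ0 hκ _
  · rw [hτc1, hτc0, hk'0, hk'1]
    refine brE2_ne κ hκ0 (τ 0) c hτ0 hc _ _ _ fun l hl hlk he => ?_
    rw [hcdef] at he
    have h' := c_den_shift κ hκ0 (τ 0) (τ 0) p _ he
    apply qpow_ne_one κ hκ (-(l:ℤ) - -(α:ℤ) + p) (by omega)
    rw [← h', div_self (pow_ne_zero 2 hτ0)]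
  · refine Finset.prod_ne_zero_iff.2 fun b hb => ?_
    have hb1 : b ≠ 1 := (Finset.mem_erase.1 hb).1
    have hb0 : b ≠ 0 := (Finset.mem_erase.1 (Finset.mem_of_mem_erase hb)).1
    rw [hτc0, hτcn b hb1, hk'0]
    exact brT2_ne κ hκ0 (τ 0) (τ b) hτ0 (hτ b hb1) _ _ fun l hl =>
      hττ 0 b ne01 hb1 (Ne.symm hb0) _
  · refine Finset.prod_ne_zero_iff.2 fun a ha => Finset.prod_ne_zero_iff.2 fun b hb => ?_
    have ha0 : a ≠ 0 := (Finset.mem_erase.1 ha).1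
    have hba : b ≠ a := (Finset.mem_erase.1 hb).1
    by_cases ha1 : a = 1
    · subst ha1
      rw [hτc1, hk'1]
      by_cases hb0 : b = 0
      · subst hb0
        rw [hτc0, hk'0]
        refine brT2_ne κ hκ0 c (τ 0) hc hτ0 _ _ fun l hl he => ?_
        rw [hcdef] at he
        have h' := c_num_shift κ hκ0 (τ 0) (τ 0) p _ he
        apply qpow_ne_one κ hκ (-(l:ℤ) - -(β:ℤ) - p) (by omega)
        rw [← h', div_self (pow_ne_zero 2 hτ0)]
      · rw [hτcn b hba]
        refine brT2_ne κ hκ0 c (τ b) hc (hτ b hba) _ _ fun l hl he => ?_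
        rw [hcdef] at he
        exact hττ 0 b ne01 hba (Ne.symm hb0) _ (c_num_shift κ hκ0 (τ 0) (τ b) p _ he)
    · have ha1' : a ≠ 1 := ha1
      have hka : k' a = k a := by
        rw [hk'def, Function.update_of_ne ha1, Function.update_of_ne ha0]
      rw [hτcn a ha1, hka]
      by_cases hb1 : b = 1
      · subst hb1
        rw [hτc1]
        refine brT2_ne κ hκ0 (τ a) c (hτ a ha1) hc _ _ fun l hl he => ?_
        rw [hcdef] at he
        exact hττ a 0 ha1 ne01 ha0 _ (c_den_shift κ hκ0 (τ a) (τ 0) p _ he)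
      · rw [hτcn b hb1]
        exact brT2_ne κ hκ0 (τ a) (τ b) (hτ a ha1) (hτ b hb1) _ _ fun l hl =>
          hττ a b ha1 hb1 (Ne.symm hba) _
  · refine Finset.prod_ne_zero_iff.2 fun a _ => Finset.prod_ne_zero_iff.2 fun j _ => ?_
    by_cases ha1 : a = 1
    · subst ha1
      rw [hτc1, hcdef]
      refine brT3_ne κ hκ0 (σ j) (κ ^ p * τ 0) (hσ j) (by rw [← hcdef]; exact hc) _
        fun l hl he => ?_
      exact hστ j 0 ne01 _ (c_den_shift κ hκ0 (σ j) (τ 0) p _ he)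
    · rw [hτcn a ha1]
      exact brT3_ne κ hκ0 (σ j) (τ a) (hσ j) (hτ a ha1) _ fun l hl => hστ j a ha1 _

section cont
open Filter Topology

lemma tendsto_br {g : ℂ → ℂ} {c G : ℂ} (hg : Filter.Tendsto g (𝓝 c) (𝓝 G)) (hG : G ≠ 0)
    (κ : ℂ) (m : ℕ) :
    Filter.Tendsto (fun z => br κ (g z) m) (𝓝 c) (𝓝 (br κ G m)) := by
  unfold br
  refine tendsto_finset_prod _ fun l _ => ?_
  exact (Filter.Tendsto.const_mul _ hg).sub (Filter.Tendsto.const_mul _ (hg.inv₀ hG))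

lemma tendsto_brE {g : ℂ → ℂ} {c G : ℂ} (hg : Filter.Tendsto g (𝓝 c) (𝓝 G)) (hG : G ≠ 0)
    (κ : ℂ) (m j : ℕ) :
    Filter.Tendsto (fun z => brE κ (g z) m j) (𝓝 c) (𝓝 (brE κ G m j)) := by
  unfold brE
  refine tendsto_finset_prod _ fun l _ => ?_
  exact (Filter.Tendsto.const_mul _ hg).sub (Filter.Tendsto.const_mul _ (hg.inv₀ hG))

lemma tendsto_upd {n : ℕ} (τ : Fin (n+2) → ℂ) (c : ℂ) (a : Fin (n+2)) :
    Filter.Tendsto (fun z => Function.update τ 1 z a) (𝓝 c)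
      (𝓝 (Function.update τ 1 c a)) := by
  by_cases ha : a = 1
  · subst ha
    simp only [Function.update_self]
    exact Filter.tendsto_id
  · simp only [Function.update_of_ne ha]
    exact tendsto_const_nhds

lemma tendsto_NumY {n : ℕ} (κ ρ : ℂ) (σ τ : Fin (n+2) → ℂ) (k : Fin (n+2) → ℕ) (c : ℂ)
    (hσ : ∀ i, σ i ≠ 0) (hρ0 : ρ ≠ 0) (hκ0 : κ ≠ 0)
    (hupd : ∀ b, Function.update τ 1 c b ≠ 0) :
    Filter.Tendsto (fun z => NumY κ ρ k σ (Function.update τ 1 z)) (𝓝 c)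
      (𝓝 (NumY κ ρ k σ (Function.update τ 1 c))) := by
  unfold NumY
  refine Filter.Tendsto.mul (Filter.Tendsto.mul ?_ ?_) ?_
  · exact tendsto_const_nhds
  · refine tendsto_finset_prod _ fun a _ => tendsto_finset_prod _ fun b _ => ?_
    refine tendsto_br (Filter.Tendsto.const_mul _
      (Filter.Tendsto.div (tendsto_upd τ c a) (tendsto_upd τ c b) (hupd b))) ?_ κ _
    exact mul_ne_zero (mul_ne_zero (inv_ne_zero hρ0) (zpow_ne_zero _ hκ0))
      (div_ne_zero (hupd a) (hupd b))
  · refine tendsto_finset_prod _ fun a _ => tendsto_finset_prod _ fun j _ => ?_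
    have harg : Filter.Tendsto (fun z => ρ * σ j / Function.update τ 1 z a) (𝓝 c)
        (𝓝 (ρ * σ j / Function.update τ 1 c a)) :=
      Filter.Tendsto.div tendsto_const_nhds (tendsto_upd τ c a) (hupd a)
    exact tendsto_br harg (div_ne_zero (mul_ne_zero hρ0 (hσ j)) (hupd a)) κ _

lemma tendsto_DenE {n : ℕ} (κ : ℂ) (σ τ : Fin (n+2) → ℂ) (k : Fin (n+2) → ℕ) (c : ℂ)
    (a₀ b₀ : Fin (n+2)) (j₀ : ℕ)
    (hσ : ∀ i, σ i ≠ 0) (hκ0 : κ ≠ 0)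
    (hupd : ∀ b, Function.update τ 1 c b ≠ 0) :
    Filter.Tendsto (fun z => DenE κ k σ (Function.update τ 1 z) a₀ b₀ j₀) (𝓝 c)
      (𝓝 (DenE κ k σ (Function.update τ 1 c) a₀ b₀ j₀)) := by
  unfold DenE
  have harg : ∀ a b : Fin (n+2),
      Filter.Tendsto (fun z =>
          κ ^ (-(k a : ℤ)) * (Function.update τ 1 z a / Function.update τ 1 z b)) (𝓝 c)
        (𝓝 (κ ^ (-(k a : ℤ)) * (Function.update τ 1 c a / Function.update τ 1 c b))) :=
    fun a b => Filter.Tendsto.const_mul _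
      (Filter.Tendsto.div (tendsto_upd τ c a) (tendsto_upd τ c b) (hupd b))
  have hargne : ∀ a b : Fin (n+2),
      κ ^ (-(k a : ℤ)) * (Function.update τ 1 c a / Function.update τ 1 c b) ≠ 0 :=
    fun a b => mul_ne_zero (zpow_ne_zero _ hκ0) (div_ne_zero (hupd a) (hupd b))
  refine Filter.Tendsto.mul (Filter.Tendsto.mul tendsto_const_nhds
    (Filter.Tendsto.mul (Filter.Tendsto.mul ?_ ?_) ?_)) ?_
  · exact tendsto_brE (harg a₀ b₀) (hargne a₀ b₀) κ _ _
  · exact tendsto_finset_prod _ fun b _ => tendsto_br (harg a₀ b) (hargne a₀ b) κ _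
  · exact tendsto_finset_prod _ fun a _ => tendsto_finset_prod _ fun b _ =>
      tendsto_br (harg a b) (hargne a b) κ _
  · refine tendsto_finset_prod _ fun a _ => tendsto_finset_prod _ fun j _ => ?_
    exact tendsto_br (Filter.Tendsto.div tendsto_const_nhds (tendsto_upd τ c a) (hupd a))
      (div_ne_zero (hσ j) (hupd a)) κ _

end cont

lemma alg2 (w f N₁ N₂ E₁ E₂ : ℂ) (hf : f ≠ 0) :
    (w * f) * (N₁ / (f * E₁) + N₂ / ((-f) * E₂)) = w * (N₁ / E₁ - N₂ / E₂) := by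
  have i1 : f * N₁ / (f * E₁) = N₁ / E₁ := mul_div_mul_left _ _ hf
  have i2 : (-f) * N₂ / ((-f) * E₂) = N₂ / E₂ := mul_div_mul_left _ _ (neg_ne_zero.2 hf)
  calc (w * f) * (N₁ / (f * E₁) + N₂ / ((-f) * E₂))
      = w * (f * N₁ / (f * E₁)) + (-w) * ((-f) * N₂ / ((-f) * E₂)) := by ring
    _ = w * (N₁ / E₁) + (-w) * (N₂ / E₂) := by rw [i1, i2]
    _ = w * (N₁ / E₁ - N₂ / E₂) := by ring


/-- Residue cancellation at the diagonal `v_2 = q^p v_1`: the residues of the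
summands `Y_k` and `Y_{φ_p(k)}` at `τ_2 = κ^p τ_1` cancel, expressed as the
vanishing of the limit of `(τ_2 − κ^p τ_1)(Y_k + Y_{φ_p(k)})` as `τ_2 → κ^p τ_1`. -/
theorem Y_residues_cancel_diagonal (n K : ℕ) (p : ℤ) (κ ρ : ℂ)
    (hκ0 : κ ≠ 0) (hρ0 : ρ ≠ 0)
    (hκ : ∀ m : ℕ, 1 ≤ m → κ ^ (2 * m) ≠ 1)
    (σ τ : Fin (n + 2) → ℂ) (hσ : ∀ i, σ i ≠ 0)
    (hτ : ∀ a : Fin (n + 2), a ≠ 1 → τ a ≠ 0)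
    (hττ : ∀ a b : Fin (n + 2), a ≠ 1 → b ≠ 1 → a ≠ b →
      ∀ m : ℤ, (τ a) ^ 2 / (τ b) ^ 2 ≠ (κ ^ 2) ^ m)
    (hστ : ∀ j : Fin (n + 2), ∀ a : Fin (n + 2), a ≠ 1 →
      ∀ m : ℤ, (σ j) ^ 2 / (τ a) ^ 2 ≠ (κ ^ 2) ^ m)
    (k : Fin (n + 2) → ℕ) (hk : (∑ i, k i) = K)
    (h1 : (k 1 : ℤ) + 1 ≤ (k 0 : ℤ) + p) (h2 : p ≤ (k 1 : ℤ)) :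
    Tendsto
      (fun z : ℂ => (z - κ ^ p * τ 0) *
        (Ysum κ ρ k σ (Function.update τ 1 z) +
         Ysum κ ρ
           (Function.update (Function.update k 0 ((k 1 : ℤ) - p).toNat) 1
             ((k 0 : ℤ) + p).toNat)
           σ (Function.update τ 1 z)))
      (𝓝[≠] (κ ^ p * τ 0)) (𝓝 0) := by
  have hτ0 : τ 0 ≠ 0 := hτ 0 ne01
  set α : ℕ := ((k 1 : ℤ) - p).toNat with hαdef
  set β : ℕ := ((k 0 : ℤ) + p).toNat with hβdef
  have hα : (α : ℤ) = (k 1 : ℤ) - p := Int.toNat_of_nonneg (by omega)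
  have hβ : (β : ℤ) = (k 0 : ℤ) + p := Int.toNat_of_nonneg (by omega)
  set c : ℂ := κ ^ p * τ 0 with hcdef
  set k' : Fin (n+2) → ℕ := Function.update (Function.update k 0 α) 1 β with hk'def
  have hc : c ≠ 0 := mul_ne_zero (zpow_ne_zero _ hκ0) hτ0
  have hk'1 : k' 1 = β := Function.update_self _ _ _
  have hαk0 : α < k 0 := by omega
  have hk1β : k 1 < k' 1 := by rw [hk'1]; omega
  have hupd : ∀ b : Fin (n+2), Function.update τ 1 c b ≠ 0 := by
    intro b
    by_cases hb : b = 1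
    · subst hb; rw [Function.update_self]; exact hc
    · rw [Function.update_of_ne hb]; exact hτ b hb
  have hcc : c + c ≠ 0 := by
    rw [← two_mul]; exact mul_ne_zero two_ne_zero hc
  -- identities and nonvanishing at the limit point
  have hNid := NumY_identity κ ρ hκ0 σ τ k p hτ0 h1 h2
  have hDid := DenE_identity κ hκ0 σ τ k p hτ0 h1 h2
  have hDk := DenE_k_ne κ hκ0 hκ σ τ hσ hτ hττ hστ k p h1 h2
  have hDk' := DenE_kp_ne κ hκ0 hκ σ τ hσ hτ hττ hστ k p h1 h2
  -- the comparison function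
  set G : ℂ → ℂ := fun z => κ ^ p * τ 0 * z / (z + c) *
    (NumY κ ρ k σ (Function.update τ 1 z) /
        DenE κ k σ (Function.update τ 1 z) 1 0 α -
      NumY κ ρ k' σ (Function.update τ 1 z) /
        DenE κ k' σ (Function.update τ 1 z) 0 1 (k 1)) with hGdef
  have hG : Tendsto G (𝓝 c) (𝓝 0) := by
    have hw : Tendsto (fun z : ℂ => κ ^ p * τ 0 * z / (z + c)) (𝓝 c)
        (𝓝 (κ ^ p * τ 0 * c / (c + c))) :=
      Tendsto.div (Tendsto.const_mul _ tendsto_id) (tendsto_id.add tendsto_const_nhds) hcc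
    have hs : Tendsto (fun z =>
        NumY κ ρ k σ (Function.update τ 1 z) /
            DenE κ k σ (Function.update τ 1 z) 1 0 α -
          NumY κ ρ k' σ (Function.update τ 1 z) /
            DenE κ k' σ (Function.update τ 1 z) 0 1 (k 1)) (𝓝 c) (𝓝 0) := by
      have t1 := Tendsto.div (tendsto_NumY κ ρ σ τ k c hσ hρ0 hκ0 hupd)
        (tendsto_DenE κ σ τ k c 1 0 α hσ hκ0 hupd) hDk
      have t2 := Tendsto.div (tendsto_NumY κ ρ σ τ k' c hσ hρ0 hκ0 hupd)
        (tendsto_DenE κ σ τ k' c 0 1 (k 1) hσ hκ0 hupd) hDk'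
      have := t1.sub t2
      rw [hNid, hDid, sub_self] at this
      exact this
    have := hw.mul hs
    rwa [mul_zero] at this
  have hGlim : Tendsto G (𝓝[≠] c) (𝓝 0) := hG.mono_left nhdsWithin_le_nhds
  refine hGlim.congr' ?_
  -- eventual equality on the punctured neighborhood
  have hev0 : ∀ᶠ z in 𝓝[≠] c, z ≠ (0:ℂ) :=
    (eventually_ne_nhds hc).filter_mono nhdsWithin_le_nhds
  have hevm : ∀ᶠ z in 𝓝[≠] c, z ≠ -c := by
    refine (eventually_ne_nhds ?_).filter_mono nhdsWithin_le_nhds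
    intro he
    apply hc
    have : (2:ℂ) * c = 0 := by rw [two_mul]; linear_combination he
    simpa using this
  have hevc : ∀ᶠ z in 𝓝[≠] c, z ≠ c := eventually_mem_nhdsWithin
  filter_upwards [hev0, hevm, hevc] with z hz0 hzm hzc
  -- pointwise computation
  rw [hGdef]
  rw [Ysum_eq κ ρ k σ (Function.update τ 1 z), Ysum_eq κ ρ k' σ (Function.update τ 1 z)]
  rw [DenY_eq_DenE κ k σ (Function.update τ 1 z) 1 0 ne01 α hαk0,
    DenY_eq_DenE κ k' σ (Function.update τ 1 z) 0 1 fin_ne10 (k 1) hk1β]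
  have hz1 : Function.update τ 1 z 1 = z := Function.update_self _ _ _
  have hz00 : Function.update τ 1 z 0 = τ 0 := Function.update_of_ne ne01 _ _
  have hk'0 : k' 0 = α := by
    rw [hk'def, Function.update_of_ne ne01, Function.update_self]
  set F : ℂ := (z - c) * (z + c) / (κ ^ p * τ 0 * z) with hFdef
  have hF : F ≠ 0 := by
    rw [hFdef]
    exact div_ne_zero (mul_ne_zero (sub_ne_zero.2 hzc) (by
        intro he; apply hzm; linear_combination he))
      (mul_ne_zero (mul_ne_zero (zpow_ne_zero _ hκ0) hτ0) hz0)
  have hf1 : κ ^ α * (κ ^ (-(k 1 : ℤ)) * (Function.update τ 1 z 1 / Function.update τ 1 z 0))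
      - κ ^ (-(α:ℤ)) * (κ ^ (-(k 1 : ℤ)) *
        (Function.update τ 1 z 1 / Function.update τ 1 z 0))⁻¹ = F := by
    rw [hz1, hz00]
    have g1 : (κ:ℂ) ^ (α:ℕ) * (κ ^ (-(k 1:ℤ)) * (z / τ 0)) = (κ ^ p)⁻¹ * (z / τ 0) := by
      rw [← zpow_natCast κ α, ← mul_assoc, ← zpow_add₀ hκ0,
        show (α:ℤ) + -(k 1:ℤ) = -p by omega, zpow_neg]
    have g2 : (κ:ℂ) ^ (-(α:ℤ)) * (κ ^ (-(k 1:ℤ)) * (z / τ 0))⁻¹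
        = κ ^ p * (z / τ 0)⁻¹ := by
      rw [mul_inv, ← mul_assoc, zpow_neg κ ((k 1:ℤ)), inv_inv, ← zpow_add₀ hκ0,
        show -(α:ℤ) + (k 1:ℤ) = p by omega]
    rw [g1, g2, hFdef, hcdef]
    have hκp : (κ:ℂ) ^ p ≠ 0 := zpow_ne_zero _ hκ0
    field_simp
    ring
  have hf2 : κ ^ (k 1) * (κ ^ (-(k' 0 : ℤ)) *
        (Function.update τ 1 z 0 / Function.update τ 1 z 1))
      - κ ^ (-(k 1 : ℤ)) * (κ ^ (-(k' 0 : ℤ)) *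
        (Function.update τ 1 z 0 / Function.update τ 1 z 1))⁻¹ = -F := by
    rw [hz1, hz00, hk'0]
    have g1 : (κ:ℂ) ^ ((k 1):ℕ) * (κ ^ (-(α:ℤ)) * (τ 0 / z)) = κ ^ p * (τ 0 / z) := by
      rw [← zpow_natCast κ (k 1), ← mul_assoc, ← zpow_add₀ hκ0,
        show (k 1:ℤ) + -(α:ℤ) = p by omega]
    have g2 : (κ:ℂ) ^ (-(k 1:ℤ)) * (κ ^ (-(α:ℤ)) * (τ 0 / z))⁻¹
        = (κ ^ p)⁻¹ * (τ 0 / z)⁻¹ := by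
      rw [mul_inv, ← mul_assoc, zpow_neg κ ((α:ℤ)), inv_inv, ← zpow_add₀ hκ0,
        show -(k 1:ℤ) + (α:ℤ) = -p by omega, zpow_neg]
    rw [g1, g2, hFdef, hcdef]
    have hκp : (κ:ℂ) ^ p ≠ 0 := zpow_ne_zero _ hκ0
    field_simp
    ring
  rw [hf1, hf2]
  have hw : z - c = (κ ^ p * τ 0 * z / (z + c)) * F := by
    rw [hFdef, hcdef]
    have hκp : (κ:ℂ) ^ p ≠ 0 := zpow_ne_zero _ hκ0
    have hzc' : z + κ ^ p * τ 0 ≠ 0 := by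
      intro he; apply hzm; rw [hcdef]; linear_combination he
    field_simp
  rw [hw]
  exact (alg2 (κ ^ p * τ 0 * z / (z + c)) F _ _ _ _ hF).symm
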